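/- arXiv:2001.07967 — 3 statements merged into one kernel-verified Lean document; each statement's English description precedes it below -/
import Mathlib

section
/- For each k with 1 ≤ k ≤ N, the knot u_k is ≤ v_{k−1} (for k ≥ 2) and u_k < v_k; moreover, if all interior smoothness parameters r_i are ≥ 0, then u_k < v_{k−1} ≤ v_k for k ≥ 2. -/
/-!
Write `σ i = uKnotCount p r i` for the number of knots of `u` at `x 0, …, x (i - 1)` and
`λ i = vKnotCount p r i` for the number of knots of `v` at `x 1, …, x i`, so that `u k = x i`
on `(σ i, σ (i + 1)]` and `v k = x i` on `(λ (i - 1), λ i]`. Since `r 0 = -1`, the two counts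
differ by a telescoping sum: `σ i = λ i + r i + 1`. As `r i ≥ -1` this gives `λ i < k` whenever
`u k = x i`, so the knot `v k` sits at a breakpoint strictly to the right of `x i`. In the same
way `σ i = λ (i - 1) + p i + 1` gives `λ (i - 1) < k - 1`, so `v (k - 1)` is not to the left of
`x i`, and when `r i ≥ 0` even `λ i < k - 1`.
-/

open Finset

lemma exists_index_of_eq_on_Ioc {α β : Type*} [LinearOrder α] {f : ℕ → α} {g : α → β}
    {y : ℕ → β} {n : ℕ} (hg : ∀ i < n, ∀ k, f i < k → k ≤ f (i + 1) → g k = y i) {k : α}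
    (h0 : f 0 < k) (hn : k ≤ f n) : ∃ i < n, f i < k ∧ k ≤ f (i + 1) ∧ g k = y i := by
  induction n with
  | zero => exact absurd hn h0.not_ge
  | succ n ih =>
    by_cases h : f n < k
    · exact ⟨n, n.lt_succ_self, h, hn, hg n n.lt_succ_self k h hn⟩
    · obtain ⟨i, hi, hik, hki, hgk⟩ :=
        ih (fun i hi => hg i (hi.trans n.lt_succ_self)) (not_lt.1 h)
      exact ⟨i, hi.trans n.lt_succ_self, hik, hki, hgk⟩

section Thresholds

variable {α β : Type*} [Preorder α] [LinearOrder β] {x : ℕ → α} {f : ℕ → β} {n a b : ℕ}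

lemma StrictMonoOn.lt_of_monotoneOn_of_lt (hx : StrictMonoOn x (Set.Iic n))
    (hf : MonotoneOn f (Set.Iic n)) (ha : a ≤ n) (hb : b ≤ n) (h : f a < f b) : x a < x b :=
  hx ha hb (hf.reflect_lt ha hb h)

lemma MonotoneOn.succ_le_of_monotoneOn_of_lt (hx : MonotoneOn x (Set.Iic n))
    (hf : MonotoneOn f (Set.Iic n)) (ha : a + 1 ≤ n) (hb : b ≤ n) (h : f a < f b) :
    x (a + 1) ≤ x b :=
  hx ha hb (hf.reflect_lt (Nat.le_of_succ_le ha) hb h)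

end Thresholds

section KnotCount

variable (p r : ℕ → ℤ)

def uKnotCount (i : ℕ) : ℤ := ∑ j ∈ range i, (p (j + 1) - r j)

def vKnotCount (i : ℕ) : ℤ := ∑ j ∈ Icc 1 i, (p j - r j)

@[simp]
lemma uKnotCount_zero : uKnotCount p r 0 = 0 := by simp [uKnotCount]

@[simp]
lemma vKnotCount_zero : vKnotCount p r 0 = 0 := by simp [vKnotCount]

lemma uKnotCount_succ (i : ℕ) :
    uKnotCount p r (i + 1) = uKnotCount p r i + (p (i + 1) - r i) :=
  sum_range_succ _ _

lemma vKnotCount_succ (i : ℕ) :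
    vKnotCount p r (i + 1) = vKnotCount p r i + (p (i + 1) - r (i + 1)) :=
  sum_Icc_succ_top (Nat.le_add_left 1 i) _

variable {r}

lemma uKnotCount_eq_vKnotCount_add (hr0 : r 0 = -1) (i : ℕ) :
    uKnotCount p r i = vKnotCount p r i + r i + 1 := by
  induction i with
  | zero => simp [hr0]
  | succ i ih => rw [uKnotCount_succ, ih, vKnotCount_succ]; ring

variable {p}

lemma vKnotCount_lt_of_uKnotCount_lt (hr0 : r 0 = -1) {i : ℕ} (hri : -1 ≤ r i) {k : ℤ}
    (hk : uKnotCount p r i < k) : vKnotCount p r i < k := by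
  linarith [uKnotCount_eq_vKnotCount_add p hr0 i]

lemma vKnotCount_lt_sub_one_of_uKnotCount_lt (hr0 : r 0 = -1) {i : ℕ} (hri : 0 ≤ r i) {k : ℤ}
    (hk : uKnotCount p r i < k) : vKnotCount p r i < k - 1 := by
  linarith [uKnotCount_eq_vKnotCount_add p hr0 i]

lemma vKnotCount_lt_sub_one_of_uKnotCount_succ_lt (hr0 : r 0 = -1) {i : ℕ} (hpi : 0 ≤ p (i + 1))
    {k : ℤ} (hk : uKnotCount p r (i + 1) < k) : vKnotCount p r i < k - 1 := by
  linarith [uKnotCount_eq_vKnotCount_add p hr0 (i + 1), vKnotCount_succ p r i]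

lemma vKnotCount_monotoneOn {n : ℕ} (h : ∀ j ∈ Icc 1 n, 0 ≤ p j - r j) :
    MonotoneOn (vKnotCount p r) (Set.Iic n) := fun _ _ _ hb hab =>
  sum_le_sum_of_subset_of_nonneg (Icc_subset_Icc_right hab) fun j hj _ =>
    h j (Icc_subset_Icc_right hb hj)

end KnotCount

theorem knot_interval_lemma_general (m : ℕ) (x : ℕ → ℝ)
    (hx : ∀ i, i < m → x i < x (i + 1))
    (p r : ℕ → ℤ)
    (hp : ∀ i, 1 ≤ i → i ≤ m → 0 ≤ p i)
    (hr0 : r 0 = -1) (hrm : r m = -1)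
    (hr : ∀ i, 1 ≤ i → i ≤ m - 1 → -1 ≤ r i ∧ r i ≤ min (p i) (p (i + 1)))
    (u v : ℤ → ℝ)
    (hu : ∀ i, i < m → ∀ k : ℤ,
      (∑ j ∈ Finset.range i, (p (j + 1) - r j)) < k →
      k ≤ (∑ j ∈ Finset.range (i + 1), (p (j + 1) - r j)) → u k = x i)
    (hv : ∀ i, 1 ≤ i → i ≤ m → ∀ k : ℤ,
      (∑ j ∈ Finset.Icc 1 (i - 1), (p j - r j)) < k →
      k ≤ (∑ j ∈ Finset.Icc 1 i, (p j - r j)) → v k = x i)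
    (k : ℤ) (hk1 : 1 ≤ k) (hkN : k ≤ ∑ j ∈ Finset.range m, (p (j + 1) - r j)) :
    (2 ≤ k → u k ≤ v (k - 1)) ∧
    u k < v k ∧
    ((∀ i, 1 ≤ i → i ≤ m - 1 → 0 ≤ r i) → 2 ≤ k → u k < v (k - 1) ∧ v (k - 1) ≤ v k) := by
  replace hkN : k ≤ uKnotCount p r m := hkN
  have hpr : ∀ j ∈ Icc 1 m, 0 ≤ p j - r j := fun j hj => by
    obtain ⟨hj1, hjm⟩ := mem_Icc.1 hj
    rcases hjm.eq_or_lt with rfl | hjm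
    · linarith [hp j hj1 le_rfl]
    · linarith [(hr j hj1 (by omega)).2, min_le_left (p j) (p (j + 1))]
  have hL : MonotoneOn (vKnotCount p r) (Set.Iic m) := vKnotCount_monotoneOn hpr
  have hxm : StrictMonoOn x (Set.Iic m) := strictMonoOn_Iic_of_lt_succ (by simpa using hx)
  have hLm : vKnotCount p r m = uKnotCount p r m := by
    rw [uKnotCount_eq_vKnotCount_add p hr0, hrm]; ring
  have hv_index (k' : ℤ) (hk' : 1 ≤ k') (hk'N : k' ≤ uKnotCount p r m) :
      ∃ j < m, vKnotCount p r j < k' ∧ k' ≤ vKnotCount p r (j + 1) ∧ v k' = x (j + 1) :=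
    exists_index_of_eq_on_Ioc (fun j hj => hv (j + 1) (by omega) hj) (by simp; omega)
      (hk'N.trans_eq hLm.symm)
  obtain ⟨i, him, hik, -, huk⟩ := exists_index_of_eq_on_Ioc hu (by simp; omega) hkN
  obtain ⟨j, hjm, -, hkj, hvk⟩ := hv_index k hk1 hkN
  have hri : -1 ≤ r i := by
    rcases Nat.eq_zero_or_pos i with rfl | hi0
    · exact hr0.ge
    · exact (hr i hi0 (by omega)).1
  have huv : u k < v k := by
    rw [huk, hvk]
    exact hxm.lt_of_monotoneOn_of_lt hL him.le hjm
      ((vKnotCount_lt_of_uKnotCount_lt hr0 hri hik).trans_le hkj)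
  refine ⟨fun hk2 => ?_, huv, fun hr_nonneg hk2 => ?_⟩ <;>
  obtain ⟨j', hj'm, hj'k, hkj', hvk'⟩ := hv_index (k - 1) (by omega) (by omega)
  · rw [huk, hvk']
    rcases i with _ | i
    · exact hxm.monotoneOn (Nat.zero_le m) hj'm (Nat.zero_le _)
    · exact hxm.monotoneOn.succ_le_of_monotoneOn_of_lt hL him.le hj'm
        ((vKnotCount_lt_sub_one_of_uKnotCount_succ_lt hr0 (hp (i + 1) (by omega) him.le)
          hik).trans_le hkj')
  · have hik' : vKnotCount p r i < k - 1 := by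
      rcases Nat.eq_zero_or_pos i with rfl | hi0
      · simp only [vKnotCount_zero]; omega
      · exact vKnotCount_lt_sub_one_of_uKnotCount_lt hr0 (hr_nonneg i hi0 (by omega)) hik
    rw [huk, hvk', hvk]
    exact ⟨hxm.lt_of_monotoneOn_of_lt hL him.le hj'm (hik'.trans_le hkj'),
      hxm.monotoneOn.succ_le_of_monotoneOn_of_lt hL hj'm hjm (by omega)⟩

/-- For each k with 1 ≤ k ≤ N, the knots satisfy u_k ≤ v_{k−1} (for k ≥ 2) and u_k < v_k;
moreover if all interior smoothness parameters r_i ≥ 0, then u_k < v_{k−1} ≤ v_k for k ≥ 2.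
The knot vectors are encoded by: u_k = x_i for σ(i) < k ≤ σ(i+1) (i = 0,…,m−1) and
v_k = x_i for λ(i−1) < k ≤ λ(i) (i = 1,…,m), with σ(i) = Σ_{j=0}^{i−1}(p_{j+1}−r_j),
λ(i) = Σ_{j=1}^{i}(p_j−r_j), N = σ(m). -/
theorem knot_interval_lemma (m : ℕ) (hm : 1 ≤ m) (x : ℕ → ℝ)
    (hx : ∀ i, i < m → x i < x (i + 1))
    (p r : ℕ → ℤ)
    (hp : ∀ i, 1 ≤ i → i ≤ m → 0 ≤ p i)
    (hr0 : r 0 = -1) (hrm : r m = -1)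
    (hr : ∀ i, 1 ≤ i → i ≤ m - 1 → -1 ≤ r i ∧ r i ≤ min (p i) (p (i + 1)))
    (u v : ℤ → ℝ)
    (hu : ∀ i, i < m → ∀ k : ℤ,
      (∑ j ∈ Finset.range i, (p (j + 1) - r j)) < k →
      k ≤ (∑ j ∈ Finset.range (i + 1), (p (j + 1) - r j)) → u k = x i)
    (hv : ∀ i, 1 ≤ i → i ≤ m → ∀ k : ℤ,
      (∑ j ∈ Finset.Icc 1 (i - 1), (p j - r j)) < k →
      k ≤ (∑ j ∈ Finset.Icc 1 i, (p j - r j)) → v k = x i)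
    (k : ℤ) (hk1 : 1 ≤ k) (hkN : k ≤ ∑ j ∈ Finset.range m, (p (j + 1) - r j)) :
    (2 ≤ k → u k ≤ v (k - 1)) ∧
    u k < v k ∧
    ((∀ i, 1 ≤ i → i ≤ m - 1 → 0 ≤ r i) → 2 ≤ k → u k < v (k - 1) ∧ v (k - 1) ≤ v k) :=
  knot_interval_lemma_general m x hx p r hp hr0 hrm hr u v hu hv k hk1 hkN
end

section
/- The open interval (u_k, v_k) contains the element interval (x_{i−1}, x_i) if and only if σ(i) − p_i ≤ k ≤ σ(i), where σ(i) = Σ_{j=0}^{i−1}(p_{j+1} − r_j); for all other k, the intersection (u_k, v_k) ∩ (x_{i−1}, x_i) is empty. -/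
/-!
Both knot sequences are nondecreasing step functions of `k`: `u k = x j` on the block
`σ j < k ≤ σ (j + 1)` and `v k = x l` on the block `τ (l - 1) < k ≤ τ l`, where
`τ n = ∑_{j=1}^{n} (p j - r j)`; the smoothness bounds make `σ` and `τ` nondecreasing.
Since `r 0 = -1`, telescoping gives `τ (i - 1) = σ i - p i - 1`, so `k ≤ σ i` forces
`u k ≤ x (i - 1)` and `σ i - p i ≤ k` forces `x i ≤ v k`. Outside this window either
`x i ≤ u k` or `v k ≤ x (i - 1)`, and the intervals are disjoint.
-/

open Finset

theorem exists_lt_le_succ_of_lt_of_le {α : Type*} [LinearOrder α] {f : ℕ → α} {a : α} :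
    ∀ {n : ℕ}, f 0 < a → a ≤ f n → ∃ j < n, f j < a ∧ a ≤ f (j + 1)
  | 0, h0, hn => absurd hn (not_le.2 h0)
  | n + 1, h0, hn => by
    by_cases h : a ≤ f n
    · obtain ⟨j, hjn, hj⟩ := exists_lt_le_succ_of_lt_of_le h0 h
      exact ⟨j, hjn.trans n.lt_succ_self, hj⟩
    · exact ⟨n, n.lt_succ_self, not_le.1 h, hn⟩

theorem Nat.monotoneOn_Iic_of_le_add_one {α : Type*} [Preorder α] {f : ℕ → α} {m : ℕ}
    (hf : ∀ n < m, f n ≤ f (n + 1)) : MonotoneOn f (Set.Iic m) :=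
  monotoneOn_of_le_add_one Set.ordConnected_Iic fun n _ _ hn => hf n hn

theorem sum_Icc_one_sub_eq_sum_range_sub {G : Type*} [AddCommGroup G] (p r : ℕ → G) (n : ℕ) :
    ∑ j ∈ Icc 1 n, (p j - r j) = ∑ j ∈ range n, (p (j + 1) - r j) - (r n - r 0) := by
  induction n with
  | zero => simp
  | succ n ih =>
    rw [sum_Icc_succ_top (Nat.le_add_left 1 n), sum_range_succ, ih]
    abel

section KnotVector

variable {m : ℕ} {p r : ℕ → ℤ} (hp : ∀ i, 1 ≤ i → i ≤ m → 0 ≤ p i)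
  (hr : ∀ i, 1 ≤ i → i ≤ m - 1 → -1 ≤ r i ∧ r i ≤ min (p i) (p (i + 1)))
include hp hr

theorem monotoneOn_sum_range_sub (hr0 : r 0 = -1) :
    MonotoneOn (fun n => ∑ j ∈ range n, (p (j + 1) - r j)) (Set.Iic m) :=
  Nat.monotoneOn_Iic_of_le_add_one fun n hn => by
    simp only [sum_range_succ, le_add_iff_nonneg_right, sub_nonneg]
    rcases Nat.eq_zero_or_pos n with rfl | hn0
    · linarith [hp 1 le_rfl hn]
    · exact (hr n hn0 (by omega)).2.trans (min_le_right _ _)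

theorem monotoneOn_sum_Icc_sub (hrm : r m = -1) :
    MonotoneOn (fun n => ∑ j ∈ Icc 1 n, (p j - r j)) (Set.Iic m) :=
  Nat.monotoneOn_Iic_of_le_add_one fun n hn => by
    simp only [sum_Icc_succ_top (Nat.le_add_left 1 n), le_add_iff_nonneg_right, sub_nonneg]
    rcases Nat.lt_or_ge (n + 1) m with h | h
    · exact (hr (n + 1) (by omega) (by omega)).2.trans (min_le_left _ _)
    · obtain rfl : n + 1 = m := by omega
      linarith [hp (n + 1) (by omega) le_rfl]

end KnotVector

theorem knot_support_lemma_general (m : ℕ) (x : ℕ → ℝ)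
    (hx : ∀ i, i < m → x i < x (i + 1))
    (p r : ℕ → ℤ)
    (hp : ∀ i, 1 ≤ i → i ≤ m → 0 ≤ p i)
    (hr0 : r 0 = -1) (hrm : r m = -1)
    (hr : ∀ i, 1 ≤ i → i ≤ m - 1 → -1 ≤ r i ∧ r i ≤ min (p i) (p (i + 1)))
    (u v : ℤ → ℝ)
    (hu : ∀ i, i < m → ∀ k : ℤ,
      (∑ j ∈ Finset.range i, (p (j + 1) - r j)) < k →
      k ≤ (∑ j ∈ Finset.range (i + 1), (p (j + 1) - r j)) → u k = x i)
    (hv : ∀ i, 1 ≤ i → i ≤ m → ∀ k : ℤ,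
      (∑ j ∈ Finset.Icc 1 (i - 1), (p j - r j)) < k →
      k ≤ (∑ j ∈ Finset.Icc 1 i, (p j - r j)) → v k = x i)
    (i : ℕ) (hi1 : 1 ≤ i) (hi2 : i ≤ m)
    (k : ℤ) (hk1 : 1 ≤ k) (hkN : k ≤ ∑ j ∈ Finset.range m, (p (j + 1) - r j)) :
    (((∑ j ∈ Finset.range i, (p (j + 1) - r j)) - p i ≤ k ∧
        k ≤ ∑ j ∈ Finset.range i, (p (j + 1) - r j)) →
      Set.Ioo (u k) (v k) ∩ Set.Ioo (x (i - 1)) (x i) = Set.Ioo (x (i - 1)) (x i)) ∧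
    (¬((∑ j ∈ Finset.range i, (p (j + 1) - r j)) - p i ≤ k ∧
        k ≤ ∑ j ∈ Finset.range i, (p (j + 1) - r j)) →
      Set.Ioo (u k) (v k) ∩ Set.Ioo (x (i - 1)) (x i) = ∅) := by
  obtain ⟨i, rfl⟩ : ∃ i', i = i' + 1 := ⟨i - 1, by omega⟩
  simp only [add_tsub_cancel_right]
  have hxm : MonotoneOn x (Set.Iic m) :=
    Nat.monotoneOn_Iic_of_le_add_one fun n hn => (hx n hn).le
  have hσ := monotoneOn_sum_range_sub hp hr hr0
  have hτ := monotoneOn_sum_Icc_sub hp hr hrm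
  have hτσ := sum_Icc_one_sub_eq_sum_range_sub p r
  obtain ⟨j, hjm, hj, hj'⟩ := exists_lt_le_succ_of_lt_of_le
    (f := fun n => ∑ j ∈ range n, (p (j + 1) - r j)) (lt_of_lt_of_le (by simp) hk1) hkN
  obtain ⟨l, hlm, hl, hl'⟩ := exists_lt_le_succ_of_lt_of_le
    (f := fun n => ∑ j ∈ Icc 1 n, (p j - r j)) (a := k) (n := m) (lt_of_lt_of_le (by simp) hk1)
    (by simp only [hτσ m, hrm, hr0]; omega)
  have huk : u k = x j := hu j hjm k hj hj'
  have hvk : v k = x (l + 1) := hv (l + 1) (by omega) (by omega) k (by simpa using hl) hl'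
  have hτi : ∑ j ∈ Icc 1 i, (p j - r j) =
      ∑ j ∈ range (i + 1), (p (j + 1) - r j) - p (i + 1) - 1 := by
    rw [hτσ, sum_range_succ, hr0]
    ring
  have mem : ∀ {n}, n ≤ m → n ∈ Set.Iic m := id
  refine ⟨fun hk => ?_, fun hk => ?_⟩
  · have hji : j < i + 1 := hσ.reflect_lt (mem hjm.le) (mem hi2) (hj.trans_le hk.2)
    have hil : i < l + 1 := hτ.reflect_lt (mem (by omega)) (mem hlm) (by omega)
    rw [Set.inter_eq_right, huk, hvk]
    exact Set.Ioo_subset_Ioo (hxm (mem hjm.le) (mem (by omega)) (by omega))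
      (hxm (mem hi2) (mem hlm) (by omega))
  · rw [← Set.disjoint_iff_inter_eq_empty, Set.Ioo_disjoint_Ioo]
    rcases not_and_or.mp hk with hk | hk
    · have hli : l < i := hτ.reflect_lt (mem hlm.le) (mem (by omega)) (by omega)
      have hvx : v k ≤ x i := hvk ▸ hxm (mem hlm) (mem (by omega)) (by omega)
      exact (min_le_left _ _).trans (hvx.trans (le_max_right _ _))
    · have hij : i + 1 < j + 1 :=
        hσ.reflect_lt (mem hi2) (mem hjm) ((lt_of_not_ge hk).trans_le hj')
      have hxu : x (i + 1) ≤ u k := huk ▸ hxm (mem hi2) (mem hjm.le) (by omega)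
      exact (min_le_right _ _).trans (hxu.trans (le_max_left _ _))

/-- (u_k, v_k) contains (x_{i−1}, x_i) precisely when σ(i) − p_i ≤ k ≤ σ(i),
where σ(i) = Σ_{j=0}^{i−1}(p_{j+1} − r_j); for all other k the intersection
(u_k, v_k) ∩ (x_{i−1}, x_i) is empty. -/
theorem knot_support_lemma (m : ℕ) (hm : 1 ≤ m) (x : ℕ → ℝ)
    (hx : ∀ i, i < m → x i < x (i + 1))
    (p r : ℕ → ℤ)
    (hp : ∀ i, 1 ≤ i → i ≤ m → 0 ≤ p i)
    (hr0 : r 0 = -1) (hrm : r m = -1)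
    (hr : ∀ i, 1 ≤ i → i ≤ m - 1 → -1 ≤ r i ∧ r i ≤ min (p i) (p (i + 1)))
    (u v : ℤ → ℝ)
    (hu : ∀ i, i < m → ∀ k : ℤ,
      (∑ j ∈ Finset.range i, (p (j + 1) - r j)) < k →
      k ≤ (∑ j ∈ Finset.range (i + 1), (p (j + 1) - r j)) → u k = x i)
    (hv : ∀ i, 1 ≤ i → i ≤ m → ∀ k : ℤ,
      (∑ j ∈ Finset.Icc 1 (i - 1), (p j - r j)) < k →
      k ≤ (∑ j ∈ Finset.Icc 1 i, (p j - r j)) → v k = x i)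
    (i : ℕ) (hi1 : 1 ≤ i) (hi2 : i ≤ m)
    (k : ℤ) (hk1 : 1 ≤ k) (hkN : k ≤ ∑ j ∈ Finset.range m, (p (j + 1) - r j)) :
    (((∑ j ∈ Finset.range i, (p (j + 1) - r j)) - p i ≤ k ∧
        k ≤ ∑ j ∈ Finset.range i, (p (j + 1) - r j)) →
      Set.Ioo (u k) (v k) ∩ Set.Ioo (x (i - 1)) (x i) = Set.Ioo (x (i - 1)) (x i)) ∧
    (¬((∑ j ∈ Finset.range i, (p (j + 1) - r j)) - p i ≤ k ∧
        k ≤ ∑ j ∈ Finset.range i, (p (j + 1) - r j)) →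
      Set.Ioo (u k) (v k) ∩ Set.Ioo (x (i - 1)) (x i) = ∅) :=
  knot_support_lemma_general m x hx p r hp hr0 hrm hr u v hu hv i hi1 hi2 k hk1 hkN
end

section
/- The trigonometric degree-2 Bernstein functions b₀(x) = (1 − cos(ω(1−x)))/(1 − cos ω), b₁(x) = (cos(ω(1−x)) + cos(ωx) − cos ω − 1)/(1 − cos ω), b₂(x) = (1 − cos(ωx))/(1 − cos ω) on [0,1], with 0 < ω < π, sum to 1 on [0,1], are each nonnegative on [0,1], and satisfy the end-point conditions b₀(0) = 1, b₀(1) = b₀'(1) = 0, b₂(1) = 1, b₂(0) = b₂'(0) = 0. -/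
/-!
Writing `a = ω (1 - x)` and `b = ω x`, so that `a + b = ω`, the numerator of `b₁` is
`cos a + cos b - cos (a + b) - 1 = 4 sin (a/2) sin (b/2) cos ((a+b)/2)`, a product of three
nonnegative factors when `a, b ≥ 0` and `a + b ≤ π`. The other claims are immediate:
`1 - cos` is nonnegative, `0 < ω < π` forces `cos ω < 1`, and `1 - cos (ω x)` has a critical
point at `x = 0`, while `b₀` is `b₂` reflected about `x = 1/2`.
-/

open Real

theorem cos_lt_one_of_pos_of_lt_pi {ω : ℝ} (hω0 : 0 < ω) (hωπ : ω < π) : cos ω < 1 := by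
  simpa using cos_lt_cos_of_nonneg_of_le_pi le_rfl hωπ.le hω0

theorem cos_add_cos_sub_cos_add_sub_one (a b : ℝ) :
    cos a + cos b - cos (a + b) - 1 = 4 * sin (a / 2) * sin (b / 2) * cos ((a + b) / 2) := by
  obtain ⟨u, rfl⟩ : ∃ u, a = 2 * u := ⟨a / 2, by ring⟩
  obtain ⟨v, rfl⟩ : ∃ v, b = 2 * v := ⟨b / 2, by ring⟩
  rw [← mul_add, mul_div_cancel_left₀ _ two_ne_zero, mul_div_cancel_left₀ _ two_ne_zero,
    mul_div_cancel_left₀ _ two_ne_zero, cos_two_mul u, cos_two_mul v, cos_two_mul (u + v),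
    cos_add]
  linear_combination
    2 * sin v ^ 2 * sin_sq_add_cos_sq u + 2 * (1 - cos u ^ 2) * sin_sq_add_cos_sq v

theorem cos_add_cos_sub_cos_add_sub_one_nonneg {a b : ℝ} (ha : 0 ≤ a) (hb : 0 ≤ b)
    (hab : a + b ≤ π) : 0 ≤ cos a + cos b - cos (a + b) - 1 := by
  rw [cos_add_cos_sub_cos_add_sub_one]
  have hsa : 0 ≤ sin (a / 2) := sin_nonneg_of_nonneg_of_le_pi (by linarith) (by linarith)
  have hsb : 0 ≤ sin (b / 2) := sin_nonneg_of_nonneg_of_le_pi (by linarith) (by linarith)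
  have hc : 0 ≤ cos ((a + b) / 2) := cos_nonneg_of_mem_Icc ⟨by linarith, by linarith⟩
  positivity

theorem deriv_one_sub_cos_mul_div_zero (ω c : ℝ) :
    deriv (fun x => (1 - cos (ω * x)) / c) 0 = 0 := by
  have h := (((hasDerivAt_id (0 : ℝ)).const_mul ω).cos.const_sub 1).div_const c
  simpa using h.deriv

/-- The trigonometric degree-2 Bernstein functions on [0,1] with 0 < ω < π sum to 1,
are nonnegative on [0,1], and satisfy the end-point conditions b₀(0) = 1,
b₀(1) = b₀'(1) = 0, b₂(1) = 1, b₂(0) = b₂'(0) = 0. -/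
theorem trig_bernstein_degree_two (ω : ℝ) (hω0 : 0 < ω) (hωπ : ω < π)
    (b₀ b₁ b₂ : ℝ → ℝ)
    (hb₀ : b₀ = fun x => (1 - Real.cos (ω * (1 - x))) / (1 - Real.cos ω))
    (hb₁ : b₁ = fun x =>
      (Real.cos (ω * (1 - x)) + Real.cos (ω * x) - Real.cos ω - 1) / (1 - Real.cos ω))
    (hb₂ : b₂ = fun x => (1 - Real.cos (ω * x)) / (1 - Real.cos ω)) :
    (∀ x ∈ Set.Icc (0 : ℝ) 1, b₀ x + b₁ x + b₂ x = 1) ∧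
    (∀ x ∈ Set.Icc (0 : ℝ) 1, 0 ≤ b₀ x ∧ 0 ≤ b₁ x ∧ 0 ≤ b₂ x) ∧
    b₀ 0 = 1 ∧ b₀ 1 = 0 ∧ deriv b₀ 1 = 0 ∧
    b₂ 1 = 1 ∧ b₂ 0 = 0 ∧ deriv b₂ 0 = 0 := by
  have hc : 0 < 1 - cos ω := sub_pos.mpr (cos_lt_one_of_pos_of_lt_pi hω0 hωπ)
  subst hb₀ hb₁ hb₂
  refine ⟨fun x _ => by field_simp; ring, fun x ⟨hx0, hx1⟩ => ⟨?_, ?_, ?_⟩,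
    by simp [hc.ne'], by simp, ?_, by simp [hc.ne'], by simp,
    deriv_one_sub_cos_mul_div_zero ω _⟩
  · exact div_nonneg (sub_nonneg.mpr (cos_le_one _)) hc.le
  · have hsum : ω * (1 - x) + ω * x = ω := by ring
    have := cos_add_cos_sub_cos_add_sub_one_nonneg (a := ω * (1 - x)) (b := ω * x)
      (by nlinarith) (by positivity) (by linarith)
    rw [hsum] at this
    exact div_nonneg this hc.le
  · exact div_nonneg (sub_nonneg.mpr (cos_le_one _)) hc.le
  · rw [deriv_comp_const_sub (f := fun y => (1 - cos (ω * y)) / (1 - cos ω)), sub_self,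
      deriv_one_sub_cos_mul_div_zero, neg_zero]
end
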